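/- There is a constant c > 0 depending only on n such that for every locally integrable f : ℝⁿ₊ → ℝ one has ‖f_o‖_{BMO} ≤ c ‖f_z‖_{BMO} and ‖f_z‖_{BMO} ≤ c ‖f_o‖_{BMO} (as extended real numbers), where f_z is the zero extension and f_o the odd extension of f. In particular, the zero extension of f belongs to BMO(ℝⁿ) if and only if the odd extension of f belongs to BMO(ℝⁿ). -/

import Mathlib

open MeasureTheory ENNReal Real Set

noncomputable section

/-- `ℝⁿ` with the Euclidean norm. -/
abbrev En (n : ℕ) := EuclideanSpace ℝ (Fin n)

/-- Axis-parallel cube with lower corner `a` and side length `l`. -/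
def cube {n : ℕ} (a : En n) (l : ℝ) : Set (En n) :=
  {x | ∀ i, x i ∈ Set.Icc (a i) (a i + l)}

/-- The classical BMO seminorm (as an extended real number):
`sup_Q (1/|Q|) ∫_Q |f - f_Q|`, supremum over all axis-parallel cubes. -/
def bmoNorm {n : ℕ} (f : En n → ℝ) : ℝ≥0∞ :=
  ⨆ (a : En n) (l : ℝ) (_ : 0 < l),
    (∫⁻ x in cube a l, ENNReal.ofReal |f x - ⨍ y in cube a l, f y|) / volume (cube a l)

/-- The last coordinate `x_n` of a point of `ℝ^{n+1}`. -/
def lastC {n : ℕ} (x : En (n + 1)) : ℝ := x (Fin.last n)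

/-- Reflection `x̃ = (x', -x_n)` across the hyperplane `{x_n = 0}`. -/
def reflx {n : ℕ} (x : En (n + 1)) : En (n + 1) :=
  WithLp.toLp 2 (Function.update x (Fin.last n) (-(x (Fin.last n))))

/-- Upper half space `ℝⁿ₊ = {x : x_n > 0}`. -/
def upperHalf (n : ℕ) : Set (En (n + 1)) := {x | 0 < lastC x}

/-- Lower half space `ℝⁿ₋ = {x : x_n < 0}`. -/
def lowerHalf (n : ℕ) : Set (En (n + 1)) := {x | lastC x < 0}

/-- Even extension of a function given on the upper half space. -/
def evenExt {n : ℕ} (f : En (n + 1) → ℝ) : En (n + 1) → ℝ :=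
  fun x => if 0 < lastC x then f x else f (reflx x)

/-- Odd extension of a function given on the upper half space. -/
def oddExt {n : ℕ} (f : En (n + 1) → ℝ) : En (n + 1) → ℝ :=
  fun x => if 0 < lastC x then f x else -f (reflx x)

/-- Zero extension of a function given on the upper half space. -/
def zeroExt {n : ℕ} (f : En (n + 1) → ℝ) : En (n + 1) → ℝ :=
  fun x => if 0 < lastC x then f x else 0

end

/-!
Away from the null hyperplane `x_n = 0` the odd extension is `f_o = f_z - f_z ∘ R`, where `R` is
the reflection `x ↦ x̃`, and `R` maps cubes to cubes of the same size. Since the mean oscillation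
`∫_Q |F - F_Q|` is at most `2 ∫_Q |F - c|` for every constant `c`, the choice
`c = (f_z)_Q - (f_z)_{R Q}` gives `‖f_o‖ ≤ 4 ‖f_z‖`.

Conversely, `f_z = f_o` on cubes in the upper half space. A cube `Q` reaching below the hyperplane
has `∫_Q |f_z - (f_z)_Q| ≤ 2 ∫_Q |f_z|`; if it also reaches above, `Q` lies in an `R`-invariant cube
`Q*` of at most `2^d` times its volume (`d` the dimension), on which `f_o` has mean zero, so
`∫_Q |f_z| ≤ ∫_{Q*} |f_o| = ∫_{Q*} |f_o - (f_o)_{Q*}|`.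
-/

section

variable {α : Type*} [MeasurableSpace α] {μ : Measure α}

lemma integral_eq_zero_of_comp_ae_eq_neg {T : α → α} (hT : MeasurePreserving T μ μ)
    (hTe : MeasurableEmbedding T) {s : Set α} (hs : T ⁻¹' s = s) {F : α → ℝ}
    (hF : ∀ᵐ x ∂μ, F (T x) = -F x) : ∫ x in s, F x ∂μ = 0 := by
  have h := hT.setIntegral_preimage_emb hTe F s
  rw [hs, integral_congr_ae (ae_restrict_of_ae hF), integral_neg] at h
  linarith

lemma lintegral_enorm_sub_average_le [IsFiniteMeasure μ] {f : α → ℝ}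
    (hf : AEStronglyMeasurable f μ) (c : ℝ) :
    ∫⁻ x, ‖f x - ⨍ y, f y ∂μ‖ₑ ∂μ ≤ 2 * ∫⁻ x, ‖f x - c‖ₑ ∂μ := by
  by_cases hfi : Integrable f μ
  swap
  · suffices ∫⁻ x, ‖f x - c‖ₑ ∂μ = ⊤ by simp [this]
    by_contra h
    have hfc : Integrable (fun x => f x - c) μ :=
      ⟨hf.sub aestronglyMeasurable_const, lt_top_iff_ne_top.2 h⟩
    exact hfi (integrable_add_const_iff.1 (by simpa only [sub_eq_add_neg] using hfc))
  have hmean : μ univ * ‖(⨍ y, f y ∂μ) - c‖ₑ ≤ ∫⁻ x, ‖f x - c‖ₑ ∂μ := by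
    calc μ univ * ‖(⨍ y, f y ∂μ) - c‖ₑ = ‖∫ x, (f x - c) ∂μ‖ₑ := by
          rw [integral_sub hfi (integrable_const c), integral_const, ← measure_smul_average,
            ← smul_sub, enorm_smul, Real.enorm_of_nonneg measureReal_nonneg, ofReal_measureReal]
      _ ≤ ∫⁻ x, ‖f x - c‖ₑ ∂μ := enorm_integral_le_lintegral_enorm _
  calc ∫⁻ x, ‖f x - ⨍ y, f y ∂μ‖ₑ ∂μ
      ≤ ∫⁻ x, (‖f x - c‖ₑ + ‖(⨍ y, f y ∂μ) - c‖ₑ) ∂μ :=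
        lintegral_mono fun x => by
          simpa only [sub_sub_sub_cancel_right] using
            enorm_sub_le (a := f x - c) (b := ⨍ y, f y ∂μ - c)
    _ = ∫⁻ x, ‖f x - c‖ₑ ∂μ + μ univ * ‖(⨍ y, f y ∂μ) - c‖ₑ := by
        rw [lintegral_add_right _ measurable_const, lintegral_const, mul_comm]
    _ ≤ 2 * ∫⁻ x, ‖f x - c‖ₑ ∂μ := by rw [two_mul]; gcongr

end

section

variable {n : ℕ}

lemma reflx_apply (x : En (n + 1)) (i : Fin (n + 1)) :
    reflx x i = if i = Fin.last n then -x (Fin.last n) else x i := by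
  simp [reflx, Function.update_apply]

lemma lastC_reflx (x : En (n + 1)) : lastC (reflx x) = -lastC x := by
  simp [lastC, reflx_apply]

lemma reflx_reflx (x : En (n + 1)) : reflx (reflx x) = x := by
  ext i
  by_cases hi : i = Fin.last n <;> simp [reflx_apply, hi]

noncomputable def reflxIsometry : En (n + 1) ≃ₗᵢ[ℝ] En (n + 1) :=
  .piLpCongrRight 2 fun i => if i = Fin.last n then .neg ℝ else .refl ℝ ℝ

lemma coe_reflxIsometry : ⇑(reflxIsometry (n := n)) = reflx := by
  ext x i
  by_cases hi : i = Fin.last n <;> simp [reflxIsometry, reflx_apply, hi]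

lemma measurePreserving_reflx : MeasurePreserving (reflx (n := n)) :=
  coe_reflxIsometry ▸ reflxIsometry.measurePreserving

lemma measurableEmbedding_reflx : MeasurableEmbedding (reflx (n := n)) :=
  coe_reflxIsometry ▸ reflxIsometry.toHomeomorph.measurableEmbedding

lemma ae_lastC_ne_zero : ∀ᵐ x : En (n + 1), lastC x ≠ 0 := by
  have hker := Measure.addHaar_submodule volume
    (LinearMap.ker (EuclideanSpace.proj (𝕜 := ℝ) (Fin.last n)).toLinearMap) fun h => by
      have := h.symm ▸ Submodule.mem_top (x := EuclideanSpace.single (Fin.last n) (1 : ℝ))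
      simp at this
  exact measure_eq_zero_iff_ae_notMem.1 hker

lemma cube_eq_preimage (a : En n) (l : ℝ) :
    cube a l =
      (MeasurableEquiv.toLp 2 (Fin n → ℝ)).symm ⁻¹' univ.pi fun i => Icc (a i) (a i + l) := by
  ext x
  exact ⟨fun h i _ => h i, fun h i => h i (mem_univ i)⟩

lemma measurableSet_cube (a : En n) (l : ℝ) : MeasurableSet (cube a l) :=
  cube_eq_preimage a l ▸ (MeasurableEquiv.toLp 2 (Fin n → ℝ)).symm.measurable
    (.univ_pi fun _ => measurableSet_Icc)

lemma volume_cube (a : En n) (l : ℝ) : volume (cube a l) = ENNReal.ofReal l ^ n := by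
  rw [cube_eq_preimage, (EuclideanSpace.volume_preserving_symm_measurableEquiv_toLp
    (Fin n)).measure_preimage (MeasurableSet.univ_pi fun _ => measurableSet_Icc).nullMeasurableSet,
    volume_pi_pi]
  simp [Real.volume_Icc]

lemma volume_cube_ne_top (a : En n) (l : ℝ) : volume (cube a l) ≠ ⊤ := by
  simp [volume_cube]

instance isFiniteMeasure_restrict_cube (a : En n) (l : ℝ) :
    IsFiniteMeasure (volume.restrict (cube a l)) :=
  isFiniteMeasure_restrict.2 (volume_cube_ne_top a l)

lemma volume_cube_ne_zero (a : En n) {l : ℝ} (hl : 0 < l) : volume (cube a l) ≠ 0 := by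
  simp [volume_cube, hl]

lemma reflx_preimage_cube {a b : En (n + 1)} {l : ℝ} (hb : ∀ i ≠ Fin.last n, b i = a i)
    (hlast : a (Fin.last n) + b (Fin.last n) + l = 0) : reflx ⁻¹' cube a l = cube b l := by
  ext x
  refine forall_congr' fun i => ?_
  by_cases hi : i = Fin.last n
  · subst hi
    simp only [reflx_apply, if_pos, mem_Icc]
    constructor <;> intro h <;> constructor <;> linarith [h.1, h.2]
  · simp [reflx_apply, hi, hb i hi]

lemma lintegral_le_bmoNorm_mul (f : En n → ℝ) (a : En n) {l : ℝ} (hl : 0 < l) :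
    ∫⁻ x in cube a l, ‖f x - ⨍ y in cube a l, f y‖ₑ ≤ bmoNorm f * volume (cube a l) := by
  simp_rw [Real.enorm_eq_ofReal_abs]
  refine (ENNReal.div_le_iff_le_mul (.inl (volume_cube_ne_zero a hl))
    (.inl (volume_cube_ne_top a l))).1 ?_
  exact le_iSup_of_le a (le_iSup_of_le l (le_iSup_of_le hl le_rfl))

lemma bmoNorm_le_of_forall_cube {f : En n → ℝ} {C : ℝ≥0∞}
    (h : ∀ a l, 0 < l → ∫⁻ x in cube a l, ‖f x - ⨍ y in cube a l, f y‖ₑ ≤ C * volume (cube a l)) :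
    bmoNorm f ≤ C := by
  simp_rw [Real.enorm_eq_ofReal_abs] at h
  exact iSup_le fun a => iSup_le fun l => iSup_le fun hl => ENNReal.div_le_of_le_mul (h a l hl)

lemma measurableSet_upperHalf : MeasurableSet (upperHalf n) :=
  measurableSet_lt measurable_const (EuclideanSpace.proj (Fin.last n)).continuous.measurable

lemma zeroExt_eq_indicator (f : En (n + 1) → ℝ) : zeroExt f = (upperHalf n).indicator f := by
  ext x
  simp only [zeroExt, indicator_apply, upperHalf, mem_ofPred_eq]

lemma aestronglyMeasurable_zeroExt {f : En (n + 1) → ℝ}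
    (hf : AEStronglyMeasurable f (volume.restrict (upperHalf n))) :
    AEStronglyMeasurable (zeroExt f) :=
  zeroExt_eq_indicator f ▸ (aestronglyMeasurable_indicator_iff measurableSet_upperHalf).2 hf

lemma oddExt_ae_eq_sub (f : En (n + 1) → ℝ) :
    oddExt f =ᵐ[volume] fun x => zeroExt f x - zeroExt f (reflx x) := by
  filter_upwards [ae_lastC_ne_zero] with x hx
  rcases hx.lt_or_gt with h | h <;> simp [oddExt, zeroExt, lastC_reflx, h, h.not_gt]

lemma oddExt_reflx_ae_eq (f : En (n + 1) → ℝ) :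
    ∀ᵐ x, oddExt f (reflx x) = -oddExt f x := by
  filter_upwards [ae_lastC_ne_zero] with x hx
  rcases hx.lt_or_gt with h | h <;> simp [oddExt, lastC_reflx, reflx_reflx, h, h.not_gt]

lemma aestronglyMeasurable_oddExt {f : En (n + 1) → ℝ}
    (hf : AEStronglyMeasurable (zeroExt f)) : AEStronglyMeasurable (oddExt f) :=
  (hf.sub (hf.comp_measurePreserving measurePreserving_reflx)).congr (oddExt_ae_eq_sub f).symm

lemma enorm_zeroExt_le_enorm_oddExt (f : En (n + 1) → ℝ) (x : En (n + 1)) :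
    ‖zeroExt f x‖ₑ ≤ ‖oddExt f x‖ₑ := by
  unfold zeroExt oddExt
  split_ifs <;> simp

theorem bmoNorm_oddExt_le {f : En (n + 1) → ℝ} (hf : AEStronglyMeasurable (zeroExt f)) :
    bmoNorm (oddExt f) ≤ 4 * bmoNorm (zeroExt f) := by
  set g := zeroExt f
  refine bmoNorm_le_of_forall_cube fun a l hl => ?_
  set b : En (n + 1) := WithLp.toLp 2 (Function.update a (Fin.last n) (-a (Fin.last n) - l))
  have hpre : reflx ⁻¹' cube b l = cube a l :=
    reflx_preimage_cube (fun i hi => by simp [b, hi]) (by simp [b]; ring)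
  set c₁ := ⨍ y in cube a l, g y
  set c₂ := ⨍ y in cube b l, g y
  have hsplit : ∫⁻ x in cube a l, ‖oddExt f x - (c₁ - c₂)‖ₑ ≤
      (∫⁻ x in cube a l, ‖g x - c₁‖ₑ) + ∫⁻ x in cube b l, ‖g x - c₂‖ₑ := by
    have hchange := measurePreserving_reflx.setLIntegral_comp_preimage_emb
      measurableEmbedding_reflx (fun y => ‖g y - c₂‖ₑ) (cube b l)
    rw [← hchange, hpre, ← lintegral_add_left' (hf.aemeasurable.sub_const c₁).enorm.restrict]
    refine lintegral_mono_ae ?_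
    filter_upwards [ae_restrict_of_ae (oddExt_ae_eq_sub f)] with x hx
    rw [hx, sub_sub_sub_comm]
    exact enorm_sub_le
  calc ∫⁻ x in cube a l, ‖oddExt f x - ⨍ y in cube a l, oddExt f y‖ₑ
      ≤ 2 * ∫⁻ x in cube a l, ‖oddExt f x - (c₁ - c₂)‖ₑ :=
        lintegral_enorm_sub_average_le (aestronglyMeasurable_oddExt hf).restrict _
    _ ≤ 2 * (bmoNorm g * volume (cube a l) + bmoNorm g * volume (cube b l)) := by
        grw [hsplit, lintegral_le_bmoNorm_mul g a hl, lintegral_le_bmoNorm_mul g b hl]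
    _ = 4 * bmoNorm g * volume (cube a l) := by
        rw [volume_cube b, ← volume_cube a]
        ring

lemma exists_reflx_invariant_cube_superset {a : En (n + 1)} {l : ℝ} (ha : a (Fin.last n) < 0)
    (hal : 0 < a (Fin.last n) + l) :
    ∃ b l', 0 < l' ∧ l' ≤ 2 * l ∧ cube a l ⊆ cube b l' ∧ reflx ⁻¹' cube b l' = cube b l' := by
  set m := max (-a (Fin.last n)) (a (Fin.last n) + l)
  have hm₁ : -a (Fin.last n) ≤ m := le_max_left _ _
  have hm₂ : a (Fin.last n) + l ≤ m := le_max_right _ _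
  have hml : m ≤ l := max_le (by linarith) (by linarith)
  set b : En (n + 1) := WithLp.toLp 2 (Function.update a (Fin.last n) (-m))
  refine ⟨b, 2 * m, by linarith, by linarith, fun x hx i => ?_,
    reflx_preimage_cube (fun _ _ => rfl) (by simp [b]; ring)⟩
  have hxi := hx i
  by_cases hi : i = Fin.last n
  · subst hi
    simp only [b, Function.update_self, mem_Icc] at hxi ⊢
    constructor <;> linarith [hxi.1, hxi.2]
  · simp only [b, Function.update_of_ne hi, mem_Icc] at hxi ⊢
    constructor <;> linarith [hxi.1, hxi.2]

lemma setAverage_oddExt_eq_zero (f : En (n + 1) → ℝ) {b : En (n + 1)} {l : ℝ}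
    (hb : reflx ⁻¹' cube b l = cube b l) : ⨍ y in cube b l, oddExt f y = 0 := by
  rw [setAverage_eq, integral_eq_zero_of_comp_ae_eq_neg measurePreserving_reflx
    measurableEmbedding_reflx hb (oddExt_reflx_ae_eq f), smul_zero]

lemma lintegral_enorm_zeroExt_le (f : En (n + 1) → ℝ) {a : En (n + 1)} {l : ℝ}
    (ha : a (Fin.last n) < 0) :
    ∫⁻ x in cube a l, ‖zeroExt f x‖ₑ ≤ 2 ^ (n + 1) * bmoNorm (oddExt f) * volume (cube a l) := by
  rcases le_or_gt (a (Fin.last n) + l) 0 with hbelow | hcross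
  · have hzero : ∀ x ∈ cube a l, ‖zeroExt f x‖ₑ = 0 := fun x hx => by
      have : ¬ 0 < lastC x := not_lt.2 ((hx (Fin.last n)).2.trans hbelow)
      simp [zeroExt, this]
    rw [setLIntegral_congr_fun (measurableSet_cube a l) hzero, lintegral_zero]
    exact zero_le
  obtain ⟨b, l', hl', hl'le, hsub, hsymm⟩ := exists_reflx_invariant_cube_superset ha hcross
  have hvol : volume (cube b l') ≤ 2 ^ (n + 1) * volume (cube a l) := by
    rw [volume_cube, volume_cube, ← mul_pow, ← ENNReal.ofReal_ofNat 2,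
      ← ENNReal.ofReal_mul zero_le_two]
    gcongr
  calc ∫⁻ x in cube a l, ‖zeroExt f x‖ₑ
      ≤ ∫⁻ x in cube b l', ‖oddExt f x‖ₑ :=
        lintegral_mono' (Measure.restrict_mono hsub le_rfl) (enorm_zeroExt_le_enorm_oddExt f)
    _ = ∫⁻ x in cube b l', ‖oddExt f x - ⨍ y in cube b l', oddExt f y‖ₑ := by
        simp only [setAverage_oddExt_eq_zero f hsymm, sub_zero]
    _ ≤ bmoNorm (oddExt f) * volume (cube b l') := lintegral_le_bmoNorm_mul _ b hl'
    _ ≤ 2 ^ (n + 1) * bmoNorm (oddExt f) * volume (cube a l) := by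
        grw [hvol]
        rw [mul_left_comm, mul_assoc]

theorem bmoNorm_zeroExt_le {f : En (n + 1) → ℝ} (hf : AEStronglyMeasurable (zeroExt f)) :
    bmoNorm (zeroExt f) ≤ 2 ^ (n + 2) * bmoNorm (oddExt f) := by
  refine bmoNorm_le_of_forall_cube fun a l hl => ?_
  rcases le_or_gt 0 (a (Fin.last n)) with hup | hlow
  · have hae : zeroExt f =ᵐ[volume.restrict (cube a l)] oddExt f := by
      filter_upwards [ae_restrict_mem (measurableSet_cube a l),
        ae_restrict_of_ae ae_lastC_ne_zero] with x hx hx₀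
      have : 0 < lastC x := lt_of_le_of_ne (hup.trans (hx (Fin.last n)).1) hx₀.symm
      simp [zeroExt, oddExt, this]
    rw [average_congr hae, lintegral_congr_ae (hae.mono fun x hx => by rw [hx])]
    calc _ ≤ bmoNorm (oddExt f) * volume (cube a l) := lintegral_le_bmoNorm_mul _ a hl
      _ ≤ 2 ^ (n + 2) * bmoNorm (oddExt f) * volume (cube a l) := by
        gcongr
        exact le_mul_of_one_le_left' (one_le_pow₀ one_le_two)
  · calc ∫⁻ x in cube a l, ‖zeroExt f x - ⨍ y in cube a l, zeroExt f y‖ₑ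
        ≤ 2 * ∫⁻ x in cube a l, ‖zeroExt f x - 0‖ₑ :=
          lintegral_enorm_sub_average_le hf.restrict 0
      _ ≤ 2 * (2 ^ (n + 1) * bmoNorm (oddExt f) * volume (cube a l)) := by
        simp only [sub_zero]
        gcongr
        exact lintegral_enorm_zeroExt_le f hlow
      _ = 2 ^ (n + 2) * bmoNorm (oddExt f) * volume (cube a l) := by ring

end

/-- the odd extension and the zero extension of a function on the
upper half space have comparable BMO seminorms; in particular the zero extension
is in BMO iff the odd extension is. -/
theorem stmt1 (n : ℕ) :
    ∃ c : ℝ, 0 < c ∧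
      ∀ f : En (n + 1) → ℝ, LocallyIntegrableOn f (upperHalf n) volume →
        bmoNorm (oddExt f) ≤ ENNReal.ofReal c * bmoNorm (zeroExt f) ∧
        bmoNorm (zeroExt f) ≤ ENNReal.ofReal c * bmoNorm (oddExt f) ∧
        (bmoNorm (zeroExt f) < ⊤ ↔ bmoNorm (oddExt f) < ⊤) := by
  refine ⟨2 ^ (n + 2), by positivity, fun f hf => ?_⟩
  have hg := aestronglyMeasurable_zeroExt hf.aestronglyMeasurable
  have h₁ : bmoNorm (oddExt f) ≤ 2 ^ (n + 2) * bmoNorm (zeroExt f) := by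
    grw [bmoNorm_oddExt_le hg]
    gcongr
    calc (4 : ℝ≥0∞) = 2 ^ 2 := by norm_num
      _ ≤ 2 ^ (n + 2) := pow_le_pow_right₀ one_le_two (by omega)
  have h₂ := bmoNorm_zeroExt_le hg
  have hc : ENNReal.ofReal (2 ^ (n + 2)) = 2 ^ (n + 2) := by simp
  rw [hc]
  have hc_lt : (2 : ℝ≥0∞) ^ (n + 2) < ⊤ := by simp
  exact ⟨h₁, h₂, fun h => h₁.trans_lt (mul_lt_top hc_lt h),
    fun h => h₂.trans_lt (mul_lt_top hc_lt h)⟩
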